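/- arXiv:1611.02868 — 4 statements merged into one kernel-verified Lean document; each statement's English description precedes it below -/
import Mathlib

section
/- There exists a unique additive group endomorphism j of G such that j(a) = a for every a ∈ A and j(b) = (1 − m) • b (integer scalar multiplication) for every b ∈ B. -/
/-!
The sum map `A × B →+ G`, `(a, b) ↦ a + b`, is onto with kernel the antidiagonal of `A ⊓ B`,
so a pair of homomorphisms on `A` and `B` that agree on `A ⊓ B` factors uniquely through it.
The identity of `A` and `(1 - m) •` on `B` agree on `A ⊓ B` because `m` kills `A ⊓ B`.
-/

theorem AddSubgroup.existsUnique_addMonoidHom_extend_of_sup_eq_top {G H : Type*}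
    [AddCommGroup G] [AddCommGroup H] {A B : AddSubgroup G} (hAB : A ⊔ B = ⊤)
    (f : A →+ H) (g : B →+ H)
    (hfg : ∀ x (hxA : x ∈ A) (hxB : x ∈ B), f ⟨x, hxA⟩ = g ⟨x, hxB⟩) :
    ∃! j : G →+ H, (∀ a : A, j a = f a) ∧ ∀ b : B, j b = g b := by
  set s : A × B →+ G := A.subtype.coprod B.subtype
  have hs : Function.Surjective s := by
    intro x
    obtain ⟨a, ha, b, hb, rfl⟩ := AddSubgroup.mem_sup.mp (hAB ▸ AddSubgroup.mem_top x)
    exact ⟨(⟨a, ha⟩, ⟨b, hb⟩), rfl⟩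
  have hker : s.ker ≤ (f.coprod g).ker := by
    rintro ⟨⟨a, ha⟩, ⟨b, hb⟩⟩ (hab : a + b = 0)
    have haB : a ∈ B := eq_neg_of_add_eq_zero_left hab ▸ neg_mem hb
    change f ⟨a, ha⟩ + g ⟨b, hb⟩ = 0
    rw [hfg a ha haB, ← map_add, show (⟨a, haB⟩ + ⟨b, hb⟩ : B) = 0 from Subtype.ext hab,
      map_zero]
  set j := s.liftOfSurjective hs ⟨f.coprod g, hker⟩
  have hj : ∀ x, j (s x) = f.coprod g x :=
    s.liftOfRightInverse_comp_apply _ (Function.rightInverse_surjInv hs) ⟨_, hker⟩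
  refine ⟨j, ⟨fun a ↦ by simpa [s] using hj (a, 0), fun b ↦ by simpa [s] using hj (0, b)⟩, ?_⟩
  rintro j' ⟨hjA, hjB⟩
  refine (AddMonoidHom.cancel_right hs).mp (AddMonoidHom.ext fun x ↦ ?_)
  rw [AddMonoidHom.comp_apply, AddMonoidHom.comp_apply, hj]
  simp [s, hjA, hjB]

theorem stmt_0_general {G : Type*} [AddCommGroup G] (A B : AddSubgroup G)
    (hsum : ∀ g : G, ∃ a ∈ A, ∃ b ∈ B, g = a + b)
    (m : ℕ)
    (htor : ∀ x ∈ A ⊓ B, m • x = 0) :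
    ∃! j : G →+ G,
      (∀ a ∈ A, j a = a) ∧ (∀ b ∈ B, j b = (1 - (m : ℤ)) • b) := by
  have hAB : A ⊔ B = ⊤ := by
    refine eq_top_iff.mpr fun g _ ↦ ?_
    obtain ⟨a, ha, b, hb, rfl⟩ := hsum g
    exact AddSubgroup.add_mem_sup ha hb
  have hagree : ∀ x (hxA : x ∈ A) (hxB : x ∈ B),
      A.subtype ⟨x, hxA⟩ = ((1 - (m : ℤ)) • B.subtype) ⟨x, hxB⟩ := by
    intro x hxA hxB
    simp [sub_smul, htor x ⟨hxA, hxB⟩]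
  simpa using AddSubgroup.existsUnique_addMonoidHom_extend_of_sup_eq_top hAB _ _ hagree

/-- Let `G` be an additive commutative group, `A` and `B` subgroups of `G`
with `A + B = G` (every element of `G` is a sum of an element of `A` and an element of `B`),
and let `m ≥ 1` be an integer with `m • x = 0` for every `x ∈ A ∩ B`.  Then there exists a
unique additive group endomorphism `j` of `G` with `j a = a` for `a ∈ A` and
`j b = (1 - m) • b` for `b ∈ B`. -/
theorem stmt_0 {G : Type*} [AddCommGroup G] (A B : AddSubgroup G)
    (hsum : ∀ g : G, ∃ a ∈ A, ∃ b ∈ B, g = a + b)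
    (m : ℕ) (hm : 1 ≤ m)
    (htor : ∀ x ∈ A ⊓ B, m • x = 0) :
    ∃! j : G →+ G,
      (∀ a ∈ A, j a = a) ∧ (∀ b ∈ B, j b = (1 - (m : ℤ)) • b) :=
  stmt_0_general A B hsum m htor
end

section
/- The kernel of id − j equals the set of elements a + b with a ∈ A, b ∈ B and m • b = 0, and the kernel of j + (m − 1)·id equals the set of elements a + b with a ∈ A, m • a = 0 and b ∈ B. -/
/-!
Write `x = a + b` with `a ∈ A`, `b ∈ B`. Then `(id - j) x = m • b` and
`(j + (m - 1) • id) x = m • a`: each of the two maps kills one summand and multiplies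
the other by `m`, so its kernel consists of the sums whose other summand is `m`-torsion.
-/

namespace AddMonoidHom

variable {G : Type*} [AddCommGroup G]

theorem mem_ker_iff_of_eq_zero_of_eq_nsmul {A B : AddSubgroup G}
    (hsum : ∀ g : G, ∃ a ∈ A, ∃ b ∈ B, g = a + b) {f : G →+ G} {n : ℕ}
    (hA : ∀ a ∈ A, f a = 0) (hB : ∀ b ∈ B, f b = n • b) (x : G) :
    x ∈ f.ker ↔ ∃ a ∈ A, ∃ b ∈ B, n • b = 0 ∧ x = a + b := by
  have hf : ∀ a ∈ A, ∀ b ∈ B, f (a + b) = n • b := fun a ha b hb => by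
    rw [map_add, hA a ha, hB b hb, zero_add]
  constructor
  · intro hx
    obtain ⟨a, ha, b, hb, rfl⟩ := hsum x
    exact ⟨a, ha, b, hb, (hf a ha b hb).symm.trans hx, rfl⟩
  · rintro ⟨a, ha, b, hb, hnb, rfl⟩
    exact (hf a ha b hb).trans hnb

end AddMonoidHom

theorem stmt_2_general {G : Type*} [AddCommGroup G] (A B : AddSubgroup G)
    (hsum : ∀ g : G, ∃ a ∈ A, ∃ b ∈ B, g = a + b)
    (m : ℕ)
    (j : G →+ G)
    (hjA : ∀ a ∈ A, j a = a)
    (hjB : ∀ b ∈ B, j b = (1 - (m : ℤ)) • b) :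
    (∀ x : G, x ∈ (AddMonoidHom.id G - j).ker ↔
      ∃ a ∈ A, ∃ b ∈ B, m • b = 0 ∧ x = a + b) ∧
    (∀ x : G, x ∈ (j + ((m : ℤ) - 1) • AddMonoidHom.id G).ker ↔
      ∃ a ∈ A, m • a = 0 ∧ ∃ b ∈ B, x = a + b) := by
  have hsum' : ∀ g : G, ∃ b ∈ B, ∃ a ∈ A, g = b + a := fun g => by
    obtain ⟨a, ha, b, hb, rfl⟩ := hsum g
    exact ⟨b, hb, a, ha, add_comm a b⟩
  have hidA : ∀ a ∈ A, (AddMonoidHom.id G - j) a = 0 := fun a ha => by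
    simp only [AddMonoidHom.sub_apply, AddMonoidHom.id_apply, hjA a ha, sub_self]
  have hidB : ∀ b ∈ B, (AddMonoidHom.id G - j) b = m • b := fun b hb => by
    simp only [AddMonoidHom.sub_apply, AddMonoidHom.id_apply, hjB b hb]
    rw [sub_smul, one_smul, natCast_zsmul, sub_sub_cancel]
  have hjmA : ∀ a ∈ A, (j + ((m : ℤ) - 1) • AddMonoidHom.id G) a = m • a := fun a ha => by
    simp only [AddMonoidHom.add_apply, AddMonoidHom.smul_apply, AddMonoidHom.id_apply, hjA a ha]
    rw [sub_smul, one_smul, add_sub_cancel, natCast_zsmul]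
  have hjmB : ∀ b ∈ B, (j + ((m : ℤ) - 1) • AddMonoidHom.id G) b = 0 := fun b hb => by
    simp only [AddMonoidHom.add_apply, AddMonoidHom.smul_apply, AddMonoidHom.id_apply, hjB b hb]
    rw [← add_smul, sub_add_sub_cancel', sub_self, zero_smul]
  refine ⟨AddMonoidHom.mem_ker_iff_of_eq_zero_of_eq_nsmul hsum hidA hidB, fun x => ?_⟩
  rw [AddMonoidHom.mem_ker_iff_of_eq_zero_of_eq_nsmul hsum' hjmB hjmA]
  exact ⟨fun ⟨b, hb, a, ha, hma, hx⟩ => ⟨a, ha, hma, b, hb, hx.trans (add_comm b a)⟩,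
    fun ⟨a, ha, hma, b, hb, hx⟩ => ⟨b, hb, a, ha, hma, hx.trans (add_comm a b)⟩⟩

/-- With `G`, `A`, `B`, `m` and `j` as in the context, the kernel of
`id - j` equals `{a + b | a ∈ A, b ∈ B, m • b = 0}`, and the kernel of `j + (m-1)·id`
equals `{a + b | a ∈ A, m • a = 0, b ∈ B}`. -/
theorem stmt_2 {G : Type*} [AddCommGroup G] (A B : AddSubgroup G)
    (hsum : ∀ g : G, ∃ a ∈ A, ∃ b ∈ B, g = a + b)
    (m : ℕ) (hm : 1 ≤ m)
    (j : G →+ G)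
    (hjA : ∀ a ∈ A, j a = a)
    (hjB : ∀ b ∈ B, j b = (1 - (m : ℤ)) • b) :
    (∀ x : G, x ∈ (AddMonoidHom.id G - j).ker ↔
      ∃ a ∈ A, ∃ b ∈ B, m • b = 0 ∧ x = a + b) ∧
    (∀ x : G, x ∈ (j + ((m : ℤ) - 1) • AddMonoidHom.id G).ker ↔
      ∃ a ∈ A, m • a = 0 ∧ ∃ b ∈ B, x = a + b) :=
  stmt_2_general A B hsum m j hjA hjB
end

section
/- The image of the endomorphism j + (m − 1)·id equals A, and the image of the endomorphism id − j equals B. -/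
/-!
Write `g = a + b` with `a ∈ A`, `b ∈ B`. Then `(j + (m - 1)•id) g = m • a` and `(id - j) g = m • b`,
so the two images are `m • A` and `m • B`, which are `A` and `B` by `m`-divisibility.
-/

namespace AddMonoidHom

variable {G : Type*} [AddCommGroup G]

theorem range_eq_of_eqOn_nsmul_of_eqOn_zero {A B : AddSubgroup G}
    (hsum : ∀ g : G, ∃ a ∈ A, ∃ b ∈ B, g = a + b) (f : G →+ G) (n : ℕ)
    (hfA : ∀ a ∈ A, f a = n • a) (hfB : ∀ b ∈ B, f b = 0)
    (hdiv : ∀ a ∈ A, ∃ a' ∈ A, n • a' = a) :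
    f.range = A := by
  ext g
  constructor
  · rintro ⟨x, rfl⟩
    obtain ⟨a, ha, b, hb, rfl⟩ := hsum x
    rw [map_add, hfA a ha, hfB b hb, add_zero]
    exact A.nsmul_mem ha n
  · intro hg
    obtain ⟨a', ha', rfl⟩ := hdiv g hg
    exact ⟨a', hfA a' ha'⟩

end AddMonoidHom

theorem stmt_3_general {G : Type*} [AddCommGroup G] (A B : AddSubgroup G)
    (hsum : ∀ g : G, ∃ a ∈ A, ∃ b ∈ B, g = a + b)
    (m : ℕ)
    (j : G →+ G)
    (hjA : ∀ a ∈ A, j a = a)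
    (hjB : ∀ b ∈ B, j b = (1 - (m : ℤ)) • b)
    (hdivA : ∀ a ∈ A, ∃ a' ∈ A, m • a' = a)
    (hdivB : ∀ b ∈ B, ∃ b' ∈ B, m • b' = b) :
    (j + ((m : ℤ) - 1) • AddMonoidHom.id G).range = A ∧
    (AddMonoidHom.id G - j).range = B := by
  have hsum' : ∀ g : G, ∃ b ∈ B, ∃ a ∈ A, g = b + a := fun g => by
    obtain ⟨a, ha, b, hb, rfl⟩ := hsum g
    exact ⟨b, hb, a, ha, add_comm a b⟩
  constructor
  · refine (j + ((m : ℤ) - 1) • AddMonoidHom.id G).range_eq_of_eqOn_nsmul_of_eqOn_zero hsum m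
      (fun a ha => ?_) (fun b hb => ?_) hdivA
    · simp only [AddMonoidHom.add_apply, AddMonoidHom.smul_apply, AddMonoidHom.id_apply, hjA a ha,
        ← natCast_zsmul]
      module
    · simp only [AddMonoidHom.add_apply, AddMonoidHom.smul_apply, AddMonoidHom.id_apply, hjB b hb]
      module
  · refine (AddMonoidHom.id G - j).range_eq_of_eqOn_nsmul_of_eqOn_zero hsum' m
      (fun b hb => ?_) (fun a ha => ?_) hdivB
    · simp only [AddMonoidHom.sub_apply, AddMonoidHom.id_apply, hjB b hb, ← natCast_zsmul]
      module
    · simp only [AddMonoidHom.sub_apply, AddMonoidHom.id_apply, hjA a ha, sub_self]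

/-- With `G`, `A`, `B`, `m` and `j` as in the context, and assuming
moreover that `A` and `B` are `m`-divisible, the image of `j + (m-1)·id` equals `A`
and the image of `id - j` equals `B`. -/
theorem stmt_3 {G : Type*} [AddCommGroup G] (A B : AddSubgroup G)
    (hsum : ∀ g : G, ∃ a ∈ A, ∃ b ∈ B, g = a + b)
    (m : ℕ) (hm : 1 ≤ m)
    (j : G →+ G)
    (hjA : ∀ a ∈ A, j a = a)
    (hjB : ∀ b ∈ B, j b = (1 - (m : ℤ)) • b)
    (hdivA : ∀ a ∈ A, ∃ a' ∈ A, m • a' = a)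
    (hdivB : ∀ b ∈ B, ∃ b' ∈ B, m • b' = b) :
    (j + ((m : ℤ) - 1) • AddMonoidHom.id G).range = A ∧
    (AddMonoidHom.id G - j).range = B :=
  stmt_3_general A B hsum m j hjA hjB hdivA hdivB
end

section
/- Every element of the kernel of f is annihilated by m (i.e. ker f is contained in the m-torsion subgroup B[m] = {b ∈ B : m • b = 0}), the image under f of B[m] equals the kernel of g, and the kernel of the restriction of f to B[m] equals ker f; in other words, there is a short exact sequence 0 → ker f → B[m] → ker g → 0. -/
/-! Since `g ∘ f = [m]`, the `m`-torsion `B[m]` is exactly `f⁻¹(ker g)`. This contains `ker f`,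
and surjectivity of `f` gives `f (f⁻¹(ker g)) = ker g`. -/

section

variable {M N : Type*} [AddMonoid M] [AddMonoid N] {m : ℕ} {f : M →+ N} {g : N →+ M}

theorem nsmul_eq_zero_of_map_eq_zero (hgf : ∀ b, g (f b) = m • b) {b : M} (hb : f b = 0) :
    m • b = 0 := by
  rw [← hgf b, hb, map_zero]

theorem setOf_nsmul_eq_zero_eq_preimage (hgf : ∀ b, g (f b) = m • b) :
    {b : M | m • b = 0} = f ⁻¹' {c | g c = 0} := by
  ext b
  simp only [Set.mem_ofPred_eq, Set.mem_preimage, hgf]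

end

theorem stmt_5_general {B B' : Type*} [AddCommGroup B] [AddCommGroup B']
    (m : ℕ)
    (f : B →+ B') (hf : Function.Surjective f)
    (g : B' →+ B) (hgf : ∀ b : B, g (f b) = m • b) :
    (∀ b ∈ f.ker, m • b = 0) ∧
    (f '' {b : B | m • b = 0} = {b' : B' | g b' = 0}) ∧
    ({b : B | m • b = 0 ∧ f b = 0} = {b : B | f b = 0}) :=
  ⟨fun _ hb => nsmul_eq_zero_of_map_eq_zero hgf hb,
    by rw [setOf_nsmul_eq_zero_eq_preimage hgf, Set.image_preimage_eq _ hf],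
    Set.ext fun _ => and_iff_right_of_imp (nsmul_eq_zero_of_map_eq_zero hgf)⟩

/-- Let `B`, `B'` be additive commutative groups, `m ≥ 1`,
`f : B → B'` a surjective additive homomorphism and `g : B' → B` an additive homomorphism
with `g ∘ f = [m]`.  Then `ker f ⊆ B[m]`, `f(B[m]) = ker g`, and the kernel of the
restriction of `f` to `B[m]` equals `ker f`; i.e. `0 → ker f → B[m] → ker g → 0` is exact. -/
theorem stmt_5 {B B' : Type*} [AddCommGroup B] [AddCommGroup B']
    (m : ℕ) (hm : 1 ≤ m)
    (f : B →+ B') (hf : Function.Surjective f)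
    (g : B' →+ B) (hgf : ∀ b : B, g (f b) = m • b) :
    (∀ b ∈ f.ker, m • b = 0) ∧
    (f '' {b : B | m • b = 0} = {b' : B' | g b' = 0}) ∧
    ({b : B | m • b = 0 ∧ f b = 0} = {b : B | f b = 0}) :=
  stmt_5_general m f hf g hgf
end
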